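/- A randomized algorithm M : X → PMF(Y) is (ε,δ)-differentially private if and only if for every pair of adjacent inputs x₀ and x₁ and every rejection region S ⊆ Y, the pair (PFA(x₀,x₁,M,S), PMD(x₀,x₁,M,S)) lies in the region R(ε,δ) = {(x,y) ∈ [0,1]×[0,1] : 1 − x ≤ e^ε·y + δ}. -/
import Mathlib


open scoped ENNReal

/-- Probability that a sample from `μ` lands in `S`. -/
noncomputable def prIn {Y : Type} (μ : PMF Y) (S : Set Y) : ℝ≥0∞ :=
  μ.toOuterMeasure S

/-- `(ε,δ)`-differential privacy for a randomized algorithm `M`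
with respect to an adjacency relation `adj`. -/
def IsDP {X Y : Type} (adj : X → X → Prop) (M : X → PMF Y) (ε δ : ℝ) : Prop :=
  ∀ x₀ x₁, adj x₀ x₁ → ∀ S : Set Y,
    prIn (M x₀) S ≤ ENNReal.ofReal (Real.exp ε) * prIn (M x₁) S + ENNReal.ofReal δ

/-- Probability of false alarm (Type I error), as a real number. -/
noncomputable def PFA {X Y : Type} (x₀ x₁ : X) (M : X → PMF Y) (S : Set Y) : ℝ :=
  (prIn (M x₀) S).toReal

/-- Probability of missed detection (Type II error), as a real number. -/
noncomputable def PMD {X Y : Type} (x₀ x₁ : X) (M : X → PMF Y) (S : Set Y) : ℝ :=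
  (prIn (M x₁) Sᶜ).toReal

/-- The privacy region `R(ε,δ)`. -/
def privacyRegion (ε δ : ℝ) : Set (ℝ × ℝ) :=
  {p | p.1 ∈ Set.Icc (0:ℝ) 1 ∧ p.2 ∈ Set.Icc (0:ℝ) 1 ∧
    1 - p.1 ≤ Real.exp ε * p.2 + δ}


lemma prIn_le_one {Y : Type} (μ : PMF Y) (S : Set Y) : prIn μ S ≤ 1 := by
  have h1 : μ.toOuterMeasure Set.univ = 1 :=
    (PMF.toOuterMeasure_apply_eq_one_iff μ Set.univ).2 (Set.subset_univ _)
  exact (μ.toOuterMeasure.mono (Set.subset_univ S)).trans h1.le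

lemma prIn_add_compl {Y : Type} (μ : PMF Y) (S : Set Y) :
    prIn μ S + prIn μ Sᶜ = 1 := by
  simp only [prIn, PMF.toOuterMeasure_apply]
  rw [← ENNReal.tsum_add]
  simp [Set.indicator_self_add_compl S μ, μ.tsum_coe]

lemma prIn_compl {Y : Type} (μ : PMF Y) (S : Set Y) :
    prIn μ Sᶜ = 1 - prIn μ S := by
  have h := prIn_add_compl μ S
  have h1 := prIn_le_one μ S
  rw [← h, ENNReal.add_sub_cancel_left (h1.trans_lt ENNReal.one_lt_top).ne]

lemma prIn_ne_top {Y : Type} (μ : PMF Y) (S : Set Y) : prIn μ S ≠ ⊤ :=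
  ((prIn_le_one μ S).trans_lt ENNReal.one_lt_top).ne

/-- Privacy-region characterization of `(ε,δ)`-differential privacy
(Kairouz–Oh–Viswanath). -/
theorem dp_iff_privacy_region {X Y : Type}
    (adj : X → X → Prop) (hsymm : Symmetric adj)
    (M : X → PMF Y) (ε δ : ℝ) (hε : 0 < ε) (hδ0 : 0 ≤ δ) (hδ1 : δ ≤ 1) :
    IsDP adj M ε δ ↔
      ∀ x₀ x₁, adj x₀ x₁ → ∀ S : Set Y,
        (PFA x₀ x₁ M S, PMD x₀ x₁ M S) ∈ privacyRegion ε δ := by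
  constructor
  · intro h x₀ x₁ hadj S
    have hdp := h x₀ x₁ hadj Sᶜ
    have h0 := prIn_le_one (M x₀) S
    have h1 := prIn_le_one (M x₁) Sᶜ
    refine ⟨⟨ENNReal.toReal_nonneg, ?_⟩, ⟨ENNReal.toReal_nonneg, ?_⟩, ?_⟩
    · exact ENNReal.toReal_le_of_le_ofReal one_pos.le (by simpa using h0)
    · exact ENNReal.toReal_le_of_le_ofReal one_pos.le (by simpa using h1)
    · have key : 1 - PFA x₀ x₁ M S = (prIn (M x₀) Sᶜ).toReal := by
        rw [prIn_compl, ENNReal.toReal_sub_of_le h0 ENNReal.one_ne_top, ENNReal.toReal_one]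
        rfl
      rw [key]
      have := ENNReal.toReal_mono (by
        refine ENNReal.add_ne_top.2 ⟨ENNReal.mul_ne_top ENNReal.ofReal_ne_top (prIn_ne_top _ _), ENNReal.ofReal_ne_top⟩) hdp
      rwa [ENNReal.toReal_add (ENNReal.mul_ne_top ENNReal.ofReal_ne_top (prIn_ne_top _ _)) ENNReal.ofReal_ne_top,
        ENNReal.toReal_mul, ENNReal.toReal_ofReal (Real.exp_nonneg ε),
        ENNReal.toReal_ofReal hδ0] at this
  · intro h x₀ x₁ hadj S
    have hr := (h x₀ x₁ hadj Sᶜ).2.2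
    have h0 := prIn_le_one (M x₀) S
    have key : 1 - PFA x₀ x₁ M Sᶜ = (prIn (M x₀) S).toReal := by
      unfold PFA
      rw [prIn_compl, ENNReal.toReal_sub_of_le h0 ENNReal.one_ne_top, ENNReal.toReal_one]
      ring
    have hpmd : PMD x₀ x₁ M Sᶜ = (prIn (M x₁) S).toReal := by
      unfold PMD
      rw [compl_compl]
    rw [key, hpmd] at hr
    have : (prIn (M x₀) S).toReal ≤ (ENNReal.ofReal (Real.exp ε) * prIn (M x₁) S + ENNReal.ofReal δ).toReal := by
      rwa [ENNReal.toReal_add (ENNReal.mul_ne_top ENNReal.ofReal_ne_top (prIn_ne_top _ _)) ENNReal.ofReal_ne_top,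
        ENNReal.toReal_mul, ENNReal.toReal_ofReal (Real.exp_nonneg ε),
        ENNReal.toReal_ofReal hδ0]
    exact (ENNReal.toReal_le_toReal (prIn_ne_top _ _) (ENNReal.add_ne_top.2 ⟨ENNReal.mul_ne_top ENNReal.ofReal_ne_top (prIn_ne_top _ _), ENNReal.ofReal_ne_top⟩)).1 this
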